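/- arXiv:2103.12303 — 5 statements merged into one kernel-verified Lean document; each statement's English description precedes it below -/
import Mathlib

section
/- Let n ≥ 2. The center of the algebra of transpositions 𝔤ₙ is one-dimensional, spanned by the sum of all transpositions: an element x ∈ 𝔤ₙ satisfies ⁅x, y⁆ = 0 for every y ∈ 𝔤ₙ if and only if x is a complex scalar multiple of T = ∑_{1 ≤ i < j ≤ n} (i j). -/
attribute [local instance 100] LieRing.ofAssociativeRing

/-- The algebra of transpositions `𝔤ₙ`: the Lie subalgebra of the complex group
algebra `ℂ[Sₙ]` (with bracket `⁅a, b⁆ = a*b - b*a`) generated by the transpositions. -/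
noncomputable def transpositionAlgebra (n : ℕ) :
    LieSubalgebra ℂ (MonoidAlgebra ℂ (Equiv.Perm (Fin n))) :=
  LieSubalgebra.lieSpan ℂ (MonoidAlgebra ℂ (Equiv.Perm (Fin n)))
    {x | ∃ i j : Fin n, i < j ∧ x = MonoidAlgebra.of ℂ (Equiv.Perm (Fin n)) (Equiv.swap i j)}

/-- The sum `T = ∑_{i < j} (i j)` of all transpositions in `ℂ[Sₙ]`. -/
noncomputable def sumTranspositions (n : ℕ) : MonoidAlgebra ℂ (Equiv.Perm (Fin n)) :=
  ∑ p ∈ Finset.univ.filter (fun p : Fin n × Fin n => p.1 < p.2),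
    MonoidAlgebra.of ℂ (Equiv.Perm (Fin n)) (Equiv.swap p.1 p.2)

/-!
A central element `x` of `𝔤ₙ` commutes with every transposition, hence with all of `Sₙ`,
so its coefficients are constant on conjugacy classes. For each `g`, the functional
`x ↦ ∑_σ x(σ g σ⁻¹)` vanishes on commutators `ab - ba`, and on transpositions when `g` is not
one; so it vanishes on `𝔤ₙ`, and for a class function `x` it equals `n! • x(g)`. Hence `x` is
supported on the transpositions, which form a single conjugacy class, i.e. `x` is a multiple
of `T`. Conversely, `T` has conjugation-invariant coefficients, hence is central in `ℂ[Sₙ]`.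
-/

open Equiv Equiv.Perm Finset MonoidAlgebra

theorem LieSubalgebra.map_eq_zero_of_mem_lieSpan {R L M : Type*} [CommRing R] [LieRing L]
    [LieAlgebra R L] [AddCommGroup M] [Module R M] (f : L →ₗ[R] M) {s : Set L}
    (hs : ∀ x ∈ s, f x = 0) (hlie : ∀ a b : L, f ⁅a, b⁆ = 0) {x : L}
    (hx : x ∈ lieSpan R L s) : f x = 0 :=
  lieSpan_le (K := { LinearMap.ker f with lie_mem' := fun _ _ => hlie _ _ }).2 hs hx

namespace MonoidAlgebra

variable {k G : Type*}

section Monoid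

variable [CommSemiring k] [Monoid G]

theorem commute_of_of_mem_closure {s : Set G} {x : MonoidAlgebra k G}
    (hs : ∀ g ∈ s, Commute x (of k G g)) {g : G} (hg : g ∈ Submonoid.closure s) :
    Commute x (of k G g) := by
  induction hg using Submonoid.closure_induction with
  | mem g hg => exact hs g hg
  | one =>
    rw [map_one]
    exact Commute.one_right x
  | mul g h _ _ hg hh =>
    rw [map_mul]
    exact hg.mul_right hh

theorem commute_of_forall_commute_of {x y : MonoidAlgebra k G}
    (hx : ∀ g, Commute x (of k G g)) : Commute x y := by
  induction y using MonoidAlgebra.induction_on with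
  | of g => exact hx g
  | add y z hy hz => exact hy.add_right hz
  | smul r y hy => exact hy.smul_right r

end Monoid

section Group

variable [Group G]

theorem commute_of_iff_coeff_conj [CommSemiring k] {x : MonoidAlgebra k G} {σ : G} :
    Commute x (of k G σ) ↔ ∀ g, x.coeff (σ * g * σ⁻¹) = x.coeff g := by
  rw [Commute, SemiconjBy, of_apply, ← coeff_inj, Finsupp.ext_iff]
  simp only [coeff_mul_single_apply, coeff_single_mul_apply, mul_one, one_mul]
  exact (Equiv.mulLeft σ⁻¹).forall_congr fun g => by simp

variable [Fintype G]

section CommSemiring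

variable [CommSemiring k]

theorem coeff_mul_eq_sum (x y : MonoidAlgebra k G) (g : G) :
    (x * y).coeff g = ∑ u, x.coeff u * y.coeff (u⁻¹ * g) := by
  rw [coeff_mul_apply_left, Finsupp.sum_fintype _ _ fun _ => zero_mul _]

/-- `#(centralizer {g})` times the sum of the coefficients of `x` over the conjugacy class of
`g`. -/
noncomputable def conjSum (g : G) : MonoidAlgebra k G →ₗ[k] k where
  toFun x := ∑ σ : G, x.coeff (σ * g * σ⁻¹)
  map_add' x y := by simp [sum_add_distrib]
  map_smul' r x := by simp [mul_sum]

theorem conjSum_apply (g : G) (x : MonoidAlgebra k G) :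
    conjSum g x = ∑ σ : G, x.coeff (σ * g * σ⁻¹) := rfl

theorem conjSum_mul_comm (g : G) (a b : MonoidAlgebra k G) :
    conjSum g (a * b) = conjSum g (b * a) := by
  simp only [conjSum_apply, coeff_mul_eq_sum]
  calc ∑ σ, ∑ u, a.coeff u * b.coeff (u⁻¹ * (σ * g * σ⁻¹))
      = ∑ u, ∑ τ, a.coeff u * b.coeff (τ * g * τ⁻¹ * u⁻¹) := by
        rw [sum_comm]
        refine sum_congr rfl fun u _ => (Fintype.sum_equiv (Equiv.mulLeft u) _ _ ?_).symm
        intro τ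
        simp [mul_assoc]
    _ = ∑ τ, ∑ w, b.coeff w * a.coeff (w⁻¹ * (τ * g * τ⁻¹)) := by
        rw [sum_comm]
        refine sum_congr rfl fun τ _ =>
          Fintype.sum_equiv ((Equiv.inv G).trans (Equiv.mulLeft (τ * g * τ⁻¹))) _ _ ?_
        intro u
        simp [mul_comm (a.coeff u), mul_assoc]

theorem conjSum_of_not_isConj {g t : G} (h : ¬IsConj g t) : conjSum g (of k G t) = 0 := by
  refine sum_eq_zero fun σ _ => ?_
  rw [of_apply, coeff_single]
  exact Finsupp.single_eq_of_ne fun hσ => h (isConj_iff.2 ⟨σ, hσ⟩)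

theorem conjSum_eq_card_nsmul {x : MonoidAlgebra k G}
    (hx : ∀ σ g, x.coeff (σ * g * σ⁻¹) = x.coeff g) (g : G) :
    conjSum g x = Fintype.card G • x.coeff g := by
  simp [conjSum_apply, hx]

end CommSemiring

theorem conjSum_lie [CommRing k] (g : G) (a b : MonoidAlgebra k G) : conjSum g ⁅a, b⁆ = 0 := by
  rw [Ring.lie_def, map_sub, conjSum_mul_comm, sub_self]

end Group

end MonoidAlgebra

theorem Equiv.Perm.isSwap_conj_iff {α : Type*} [DecidableEq α] [Fintype α] {σ g : Perm α} :
    (σ * g * σ⁻¹).IsSwap ↔ g.IsSwap := by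
  rw [← card_support_eq_two, ← card_support_eq_two, card_support_conj]

theorem Equiv.swap_injOn_lt {α : Type*} [LinearOrder α] [Fintype α] :
    Set.InjOn (fun p : α × α => swap p.1 p.2) {p | p.1 < p.2} := by
  rintro ⟨a, b⟩ (hab : a < b) ⟨c, d⟩ (hcd : c < d) h
  have hsupp := congrArg (fun σ : Perm α => (σ.support : Set α)) h
  simp only [support_swap hab.ne, support_swap hcd.ne, coe_pair, Set.pair_eq_pair_iff] at hsupp
  rcases hsupp with ⟨rfl, rfl⟩ | ⟨rfl, rfl⟩
  · rfl
  · exact absurd (hab.trans hcd) (lt_irrefl a)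

section Transpositions

variable {n : ℕ}

theorem swap_mem_transpositionAlgebra {i j : Fin n} (hij : i ≠ j) :
    of ℂ (Perm (Fin n)) (swap i j) ∈ transpositionAlgebra n := by
  rcases hij.lt_or_gt with h | h
  · exact LieSubalgebra.subset_lieSpan ⟨i, j, h, rfl⟩
  · exact swap_comm i j ▸ LieSubalgebra.subset_lieSpan ⟨j, i, h, rfl⟩

theorem coeff_sumTranspositions_of_isSwap {g : Perm (Fin n)} (hg : g.IsSwap) :
    (sumTranspositions n).coeff g = 1 := by
  obtain ⟨i, j, hij, rfl⟩ := hg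
  wlog h : i < j generalizing i j
  · exact swap_comm i j ▸ this j i hij.symm (hij.lt_or_gt.resolve_left h)
  rw [sumTranspositions, coeff_sum, Finsupp.finsetSum_apply,
    sum_eq_single_of_mem (i, j) (by simpa using h)]
  · simp [of_apply]
  · intro p hp hne
    rw [of_apply, coeff_single]
    exact Finsupp.single_eq_of_ne fun hp' => hne (swap_injOn_lt (by simpa using hp) h hp'.symm)

theorem coeff_sumTranspositions_of_not_isSwap {g : Perm (Fin n)} (hg : ¬g.IsSwap) :
    (sumTranspositions n).coeff g = 0 := by
  rw [sumTranspositions, coeff_sum, Finsupp.finsetSum_apply]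
  refine sum_eq_zero fun p hp => ?_
  rw [of_apply, coeff_single]
  exact Finsupp.single_eq_of_ne fun h => hg ⟨p.1, p.2, (mem_filter.1 hp).2.ne, h⟩

theorem commute_sumTranspositions (y : MonoidAlgebra ℂ (Perm (Fin n))) :
    Commute (sumTranspositions n) y := by
  refine commute_of_forall_commute_of fun σ => commute_of_iff_coeff_conj.2 fun g => ?_
  by_cases hg : g.IsSwap
  · rw [coeff_sumTranspositions_of_isSwap hg,
      coeff_sumTranspositions_of_isSwap (isSwap_conj_iff.2 hg)]
  · rw [coeff_sumTranspositions_of_not_isSwap hg,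
      coeff_sumTranspositions_of_not_isSwap (mt isSwap_conj_iff.1 hg)]

theorem coeff_eq_zero_of_mem_transpositionAlgebra {x : MonoidAlgebra ℂ (Perm (Fin n))}
    (hx : x ∈ transpositionAlgebra n) (hconj : ∀ σ g, x.coeff (σ * g * σ⁻¹) = x.coeff g)
    {g : Perm (Fin n)} (hg : ¬g.IsSwap) : x.coeff g = 0 := by
  have hsum : conjSum g x = 0 := by
    refine LieSubalgebra.map_eq_zero_of_mem_lieSpan _ ?_ (conjSum_lie g) hx
    rintro _ ⟨i, j, hij, rfl⟩
    refine conjSum_of_not_isConj fun h => hg ?_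
    obtain ⟨σ, hσ⟩ := isConj_iff.1 h
    exact isSwap_conj_iff.1 (hσ ▸ ⟨i, j, hij.ne, rfl⟩ : (σ * g * σ⁻¹).IsSwap)
  rw [conjSum_eq_card_nsmul hconj] at hsum
  exact (smul_eq_zero.1 hsum).resolve_left Fintype.card_ne_zero

theorem eq_coeff_swap_smul_sumTranspositions {x : MonoidAlgebra ℂ (Perm (Fin n))}
    (hconj : ∀ σ g, x.coeff (σ * g * σ⁻¹) = x.coeff g)
    (hswap : ∀ g : Perm (Fin n), ¬g.IsSwap → x.coeff g = 0) {a b : Fin n} (hab : a ≠ b) :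
    x = x.coeff (swap a b) • sumTranspositions n := by
  ext g
  rw [coeff_smul_apply, smul_eq_mul]
  by_cases hg : g.IsSwap
  · obtain ⟨i, j, hij, rfl⟩ := hg
    obtain ⟨σ, hσ⟩ := isConj_iff.1 (isConj_swap hab hij)
    rw [coeff_sumTranspositions_of_isSwap ⟨i, j, hij, rfl⟩, mul_one, ← hσ, hconj]
  · rw [hswap g hg, coeff_sumTranspositions_of_not_isSwap hg, mul_zero]

end Transpositions

/-- For `n ≥ 2`, the center of the algebra of transpositions `𝔤ₙ` is the line spanned
by the sum of all transpositions: `x ∈ 𝔤ₙ` commutes (in the Lie sense) with every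
element of `𝔤ₙ` iff `x` is a complex scalar multiple of `T`. -/
theorem center_transpositionAlgebra (n : ℕ) (hn : 2 ≤ n)
    (x : MonoidAlgebra ℂ (Equiv.Perm (Fin n))) (hx : x ∈ transpositionAlgebra n) :
    (∀ y ∈ transpositionAlgebra n, ⁅x, y⁆ = 0) ↔ ∃ c : ℂ, x = c • sumTranspositions n := by
  constructor
  · intro hcenter
    have hswap : ∀ σ ∈ {σ : Perm (Fin n) | σ.IsSwap}, Commute x (of ℂ _ σ) := by
      rintro _ ⟨i, j, hij, rfl⟩
      exact sub_eq_zero.1 (hcenter _ (swap_mem_transpositionAlgebra hij))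
    have hconj : ∀ σ g, x.coeff (σ * g * σ⁻¹) = x.coeff g := fun σ =>
      commute_of_iff_coeff_conj.1 <|
        commute_of_of_mem_closure hswap (by rw [mclosure_isSwap]; trivial)
    have h01 : (⟨0, by omega⟩ : Fin n) ≠ ⟨1, by omega⟩ := by simp
    exact ⟨_, eq_coeff_swap_smul_sumTranspositions hconj
      (fun g => coeff_eq_zero_of_mem_transpositionAlgebra hx hconj) h01⟩
  · rintro ⟨c, rfl⟩ y -
    rw [Ring.lie_def, smul_mul_assoc, mul_smul_comm, (commute_sumTranspositions y).eq, sub_self]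
end

section
/- Let n ≥ 2. The algebra of transpositions 𝔤ₙ is the internal direct sum of the line ℂ·T spanned by the sum of all transpositions and its derived subalgebra 𝔤ₙ′ = ⁅𝔤ₙ, 𝔤ₙ⁆: as ℂ-subspaces of ℂ[Sₙ] one has ℂ·T + 𝔤ₙ′ = 𝔤ₙ and ℂ·T ∩ 𝔤ₙ′ = {0}; equivalently, every x ∈ 𝔤ₙ is uniquely of the form x = c·T + y with c ∈ ℂ and y ∈ 𝔤ₙ′. -/
attribute [local instance 100] LieRing.ofAssociativeRing

/-- The derived subalgebra `𝔤ₙ′ = ⁅𝔤ₙ, 𝔤ₙ⁆`: the ℂ-span of all commutators of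
elements of the algebra of transpositions. -/
noncomputable def derivedTranspositionAlgebra (n : ℕ) :
    Submodule ℂ (MonoidAlgebra ℂ (Equiv.Perm (Fin n))) :=
  Submodule.span ℂ
    {z | ∃ x ∈ transpositionAlgebra n, ∃ y ∈ transpositionAlgebra n, z = ⁅x, y⁆}

/-!
The sign character `ℂ[Sₙ] → ℂ` kills every commutator but sends `T` to minus the number of
transpositions, so `ℂ·T` meets `𝔤ₙ′` only in `0`. For distinct `a, b, c` one has
`⁅⁅(a b), (a c)⁆, (b c)⁆ = 2((a c) - (a b))`, so differences of transpositions sharing a point,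
and by chaining all differences of transpositions, lie in `𝔤ₙ′`. Hence `N·(i j) - T ∈ 𝔤ₙ′` with
`N` the number of transpositions, so every generator of `𝔤ₙ` lies in `ℂ·T + 𝔤ₙ′`; this
subspace contains `⁅𝔤ₙ, 𝔤ₙ⁆` and is therefore a Lie subalgebra, so it is all of `𝔤ₙ`.
-/

open Equiv MonoidAlgebra

theorem LieSubalgebra.toSubmodule_lieSpan_le_of_lie_mem {R L : Type*} [CommRing R] [LieRing L]
    [LieAlgebra R L] {s : Set L} {S : Submodule R L} (hs : s ⊆ S)
    (hlie : ∀ x ∈ lieSpan R L s, ∀ y ∈ lieSpan R L s, ⁅x, y⁆ ∈ S)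
    (hS : S ≤ (lieSpan R L s).toSubmodule) :
    (lieSpan R L s).toSubmodule ≤ S :=
  show lieSpan R L s ≤ { S with lie_mem' := fun hx hy => hlie _ (hS hx) _ (hS hy) } from
    lieSpan_le.mpr hs

theorem AlgHom.map_lie_eq_zero {R A B : Type*} [CommRing R] [Ring A] [Algebra R A] [CommRing B]
    [Algebra R B] (f : A →ₐ[R] B) (x y : A) : f ⁅x, y⁆ = 0 := by
  rw [Ring.lie_def, map_sub, map_mul, map_mul, mul_comm, sub_self]

theorem Equiv.swap_products_of_ne {α : Type*} [DecidableEq α] {a b c : α} (hab : a ≠ b)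
    (hac : a ≠ c) (hbc : b ≠ c) :
    swap a b * swap a c * swap b c = swap a c ∧ swap a c * swap a b * swap b c = swap a b ∧
      swap b c * swap a b * swap a c = swap a b ∧ swap b c * swap a c * swap a b = swap a c := by
  refine ⟨?_, ?_, ?_, ?_⟩ <;> ext x <;> simp only [Perm.mul_apply, swap_apply_def] <;>
    split_ifs <;> simp_all

theorem MonoidAlgebra.lie_lie_of_swap {k α : Type*} [CommRing k] [DecidableEq α] {a b c : α}
    (hab : a ≠ b) (hac : a ≠ c) (hbc : b ≠ c) :
    ⁅⁅of k _ (swap a b), of k _ (swap a c)⁆, of k _ (swap b c)⁆ =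
      (2 : k) • (of k _ (swap a c) - of k _ (swap a b)) := by
  obtain ⟨h₁, h₂, h₃, h₄⟩ := swap_products_of_ne hab hac hbc
  simp only [Ring.lie_def, sub_mul, mul_sub, ← map_mul, ← mul_assoc, h₁, h₂, h₃, h₄]
  module

noncomputable def MonoidAlgebra.signAlgHom (k α : Type*) [CommRing k] [Fintype α]
    [DecidableEq α] : MonoidAlgebra k (Perm α) →ₐ[k] k :=
  lift k k (Perm α) ((Int.castRingHom k).toMonoidHom.comp ((Units.coeHom ℤ).comp Perm.sign))

theorem MonoidAlgebra.signAlgHom_of_swap {k α : Type*} [CommRing k] [Fintype α] [DecidableEq α]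
    {a b : α} (hab : a ≠ b) : signAlgHom k α (of k _ (swap a b)) = -1 := by
  simp [signAlgHom, Perm.sign_swap hab]

namespace TranspositionAlgebra

variable {n : ℕ}

def transpositionPairs (n : ℕ) : Finset (Fin n × Fin n) :=
  Finset.univ.filter (fun p : Fin n × Fin n => p.1 < p.2)

theorem sumTranspositions_eq (n : ℕ) :
    sumTranspositions n = ∑ p ∈ transpositionPairs n, of ℂ _ (swap p.1 p.2) :=
  rfl

theorem mem_transpositionPairs {p : Fin n × Fin n} : p ∈ transpositionPairs n ↔ p.1 < p.2 := by
  simp [transpositionPairs]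

theorem of_swap_mem {i j : Fin n} (hij : i ≠ j) : of ℂ _ (swap i j) ∈ transpositionAlgebra n := by
  rcases hij.lt_or_gt with h | h
  · exact LieSubalgebra.subset_lieSpan ⟨i, j, h, rfl⟩
  · exact LieSubalgebra.subset_lieSpan ⟨j, i, h, by rw [swap_comm]⟩

theorem sumTranspositions_mem (n : ℕ) : sumTranspositions n ∈ transpositionAlgebra n :=
  Submodule.sum_mem _ fun _ hp => of_swap_mem (mem_transpositionPairs.mp hp).ne

theorem lie_mem_derived {x y : MonoidAlgebra ℂ (Perm (Fin n))} (hx : x ∈ transpositionAlgebra n)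
    (hy : y ∈ transpositionAlgebra n) : ⁅x, y⁆ ∈ derivedTranspositionAlgebra n :=
  Submodule.subset_span ⟨x, hx, y, hy, rfl⟩

theorem derived_le (n : ℕ) :
    derivedTranspositionAlgebra n ≤ (transpositionAlgebra n).toSubmodule := by
  rw [derivedTranspositionAlgebra, Submodule.span_le]
  rintro z ⟨x, hx, y, hy, rfl⟩
  exact (transpositionAlgebra n).lie_mem hx hy

theorem derived_le_ker_signAlgHom (n : ℕ) :
    derivedTranspositionAlgebra n ≤ LinearMap.ker (signAlgHom ℂ (Fin n)).toLinearMap := by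
  rw [derivedTranspositionAlgebra, Submodule.span_le]
  rintro z ⟨x, -, y, -, rfl⟩
  exact LinearMap.mem_ker.mpr ((signAlgHom ℂ (Fin n)).map_lie_eq_zero x y)

theorem signAlgHom_sumTranspositions (n : ℕ) :
    signAlgHom ℂ (Fin n) (sumTranspositions n) = -(transpositionPairs n).card := by
  rw [sumTranspositions_eq, map_sum, Finset.sum_congr rfl fun p hp =>
    signAlgHom_of_swap (mem_transpositionPairs.mp hp).ne]
  simp

theorem of_swap_sub_of_swap_same_fst_mem_derived {a b c : Fin n} (hab : a ≠ b) (hac : a ≠ c) :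
    of ℂ _ (swap a b) - of ℂ _ (swap a c) ∈ derivedTranspositionAlgebra n := by
  rcases eq_or_ne b c with rfl | hbc
  · rw [sub_self]
    exact zero_mem _
  have key : of ℂ _ (swap a b) - of ℂ _ (swap a c) =
      (-(1 / 2) : ℂ) • ⁅⁅of ℂ _ (swap a b), of ℂ _ (swap a c)⁆, of ℂ _ (swap b c)⁆ := by
    rw [lie_lie_of_swap hab hac hbc, smul_smul]
    module
  rw [key]
  exact Submodule.smul_mem _ _ (lie_mem_derived
    ((transpositionAlgebra n).lie_mem (of_swap_mem hab) (of_swap_mem hac)) (of_swap_mem hbc))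

theorem of_swap_sub_of_swap_mem_derived {a b c d : Fin n} (hab : a ≠ b) (hcd : c ≠ d) :
    of ℂ _ (swap a b) - of ℂ _ (swap c d) ∈ derivedTranspositionAlgebra n := by
  rcases eq_or_ne a c with rfl | hac
  · exact of_swap_sub_of_swap_same_fst_mem_derived hab hcd
  have h := add_mem (of_swap_sub_of_swap_same_fst_mem_derived hab hac)
    (of_swap_sub_of_swap_same_fst_mem_derived hac.symm hcd)
  rwa [swap_comm c a, sub_add_sub_cancel] at h

theorem card_smul_of_swap_sub_sumTranspositions_mem_derived {i j : Fin n} (hij : i ≠ j) :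
    ((transpositionPairs n).card : ℂ) • of ℂ _ (swap i j) - sumTranspositions n ∈
      derivedTranspositionAlgebra n := by
  rw [Nat.cast_smul_eq_nsmul, ← Finset.sum_const, sumTranspositions_eq, ← Finset.sum_sub_distrib]
  exact Submodule.sum_mem _ fun p hp =>
    of_swap_sub_of_swap_mem_derived hij (mem_transpositionPairs.mp hp).ne

theorem of_swap_mem_span_sup_derived {i j : Fin n} (hij : i < j) :
    of ℂ _ (swap i j) ∈ Submodule.span ℂ {sumTranspositions n} ⊔ derivedTranspositionAlgebra n := by
  set N : ℂ := ((transpositionPairs n).card : ℂ)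
  have hN : N ≠ 0 := by
    simpa [N] using Finset.ne_empty_of_mem ((mem_transpositionPairs (p := (i, j))).mpr hij)
  have hrepr : of ℂ _ (swap i j) =
      N⁻¹ • sumTranspositions n + N⁻¹ • (N • of ℂ _ (swap i j) - sumTranspositions n) := by
    rw [smul_sub, smul_smul, inv_mul_cancel₀ hN, one_smul, add_sub_cancel]
  rw [hrepr]
  exact add_mem
    (Submodule.mem_sup_left (Submodule.smul_mem _ _ (Submodule.mem_span_singleton_self _)))
    (Submodule.mem_sup_right (Submodule.smul_mem _ _
      (card_smul_of_swap_sub_sumTranspositions_mem_derived hij.ne)))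

theorem sumTranspositions_mem_derived_iff :
    sumTranspositions n ∈ derivedTranspositionAlgebra n ↔ sumTranspositions n = 0 := by
  refine ⟨fun hT => ?_, fun hT => hT ▸ zero_mem _⟩
  have hcard : (transpositionPairs n).card = 0 := by
    simpa [signAlgHom_sumTranspositions] using derived_le_ker_signAlgHom n hT
  rw [sumTranspositions_eq, Finset.card_eq_zero.mp hcard, Finset.sum_empty]

end TranspositionAlgebra

open TranspositionAlgebra

theorem transpositionAlgebra_direct_sum_general (n : ℕ) :
    Submodule.span ℂ {sumTranspositions n} ⊔ derivedTranspositionAlgebra n =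
      (transpositionAlgebra n).toSubmodule ∧
    Submodule.span ℂ {sumTranspositions n} ⊓ derivedTranspositionAlgebra n = ⊥ := by
  have hle : Submodule.span ℂ {sumTranspositions n} ⊔ derivedTranspositionAlgebra n ≤
      (transpositionAlgebra n).toSubmodule :=
    sup_le ((Submodule.span_singleton_le_iff_mem _ _).mpr (sumTranspositions_mem n))
      (derived_le n)
  refine ⟨le_antisymm hle ?_, ?_⟩
  · refine LieSubalgebra.toSubmodule_lieSpan_le_of_lie_mem ?_
      (fun x hx y hy => Submodule.mem_sup_right (lie_mem_derived hx hy)) hle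
    rintro x ⟨i, j, hij, rfl⟩
    exact of_swap_mem_span_sup_derived hij
  · rw [← disjoint_iff, disjoint_comm, Submodule.disjoint_span_singleton]
    exact sumTranspositions_mem_derived_iff.mp

/-- For `n ≥ 2`, `𝔤ₙ` is the internal direct sum of the line `ℂ·T` spanned by the
sum of all transpositions and the derived subalgebra `𝔤ₙ′`:
`ℂ·T + 𝔤ₙ′ = 𝔤ₙ` and `ℂ·T ∩ 𝔤ₙ′ = {0}` as ℂ-subspaces of `ℂ[Sₙ]`. -/
theorem transpositionAlgebra_direct_sum (n : ℕ) (hn : 2 ≤ n) :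
    Submodule.span ℂ {sumTranspositions n} ⊔ derivedTranspositionAlgebra n =
      (transpositionAlgebra n).toSubmodule ∧
    Submodule.span ℂ {sumTranspositions n} ⊓ derivedTranspositionAlgebra n = ⊥ :=
  transpositionAlgebra_direct_sum_general n
end

section
/- A standard Young tableau is uniquely determined by its content vector: let n be a natural number and let S, T : {0,…,n−1} → ℕ × ℕ be injective functions such that for every k ≤ n−1 the image S({0,…,k}) (respectively T({0,…,k})) is a lower set of ℕ × ℕ in the componentwise order. If for every k, the content of k in S equals the content of k in T, i.e. (S(k))₂ − (S(k))₁ = (T(k))₂ − (T(k))₁ as integers, then S = T. In particular S and T have the same shape. -/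
/-!
Induct on the entries. If `S` and `T` agree below `k`, then `S k` and `T k` are both addable
cells of the same set `A` of cells filled before `k`. Two cells of equal content that differ are
comparable, and an addable cell of `A` lies above no other cell outside `A`; hence `S k = T k`.
-/

/-- The content `column - row` of a cell `(row, column)`. -/
def content (c : ℕ × ℕ) : ℤ := c.2 - c.1

lemma le_or_le_of_content_eq {x y : ℕ × ℕ} (h : content x = content y) : x ≤ y ∨ y ≤ x := by
  simp only [content] at h
  rcases le_total x.1 y.1 with h1 | h1
  · exact .inl ⟨h1, by omega⟩
  · exact .inr ⟨h1, by omega⟩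

def IsAddable {β : Type*} [Preorder β] (A : Set β) (x : β) : Prop :=
  x ∉ A ∧ IsLowerSet (insert x A)

lemma IsAddable.mem_of_lt {β : Type*} [Preorder β] {A : Set β} {x y : β}
    (hy : IsAddable A y) (hxy : x < y) : x ∈ A :=
  (hy.2 hxy.le (Set.mem_insert y A)).resolve_left hxy.ne

lemma IsAddable.eq_of_content_eq {A : Set (ℕ × ℕ)} {x y : ℕ × ℕ}
    (hx : IsAddable A x) (hy : IsAddable A y) (h : content x = content y) : x = y := by
  by_contra hne
  rcases le_or_le_of_content_eq h with hxy | hyx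
  · exact hx.1 (hy.mem_of_lt (hxy.lt_of_ne hne))
  · exact hy.1 (hx.mem_of_lt (hyx.lt_of_ne (Ne.symm hne)))

lemma isAddable_image_Iio {ι β : Type*} [LinearOrder ι] [Preorder β] {S : ι → β}
    (hinj : Function.Injective S) {k : ι} (hk : IsLowerSet (S '' Set.Iic k)) :
    IsAddable (S '' Set.Iio k) (S k) := by
  refine ⟨fun hmem => (hinj.mem_set_image.mp hmem).false, ?_⟩
  rwa [← Set.image_insert_eq, Set.Iio_insert]

/-- A standard Young tableau is uniquely determined by its content vector.
A standard Young tableau with `n` cells is encoded as an injective function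
`T : Fin n → ℕ × ℕ` (sending each entry `k` to the (row, column) coordinates of the
cell containing `k`) such that every initial image `T '' {0, …, k}` is a lower set
of `ℕ × ℕ` in the componentwise order.  If two such tableaux have the same content
vector `k ↦ (column of k) − (row of k)`, then they are equal (in particular they
have the same shape). -/
theorem SYT_eq_of_content_eq (n : ℕ) (S T : Fin n → ℕ × ℕ)
    (hSinj : Function.Injective S) (hTinj : Function.Injective T)
    (hS : ∀ k : Fin n, IsLowerSet (S '' {m | m ≤ k}))
    (hT : ∀ k : Fin n, IsLowerSet (T '' {m | m ≤ k}))
    (hc : ∀ k : Fin n, ((S k).2 : ℤ) - ((S k).1 : ℤ) = ((T k).2 : ℤ) - ((T k).1 : ℤ)) :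
    S = T := by
  funext k
  induction k using WellFoundedLT.induction with
  | _ k ih =>
    have hprefix : S '' Set.Iio k = T '' Set.Iio k := Set.image_congr ih
    have hSk := isAddable_image_Iio hSinj (hS k)
    have hTk := isAddable_image_Iio hTinj (hT k)
    rw [hprefix] at hSk
    exact hSk.eq_of_content_eq hTk (hc k)
end

section
/- Let G be a group, V a finite-dimensional complex inner product space, and ρ a representation of G on V whose inner product is G-invariant: ⟪ρ(g)v, ρ(g)w⟫ = ⟪v, w⟫ for all g ∈ G and v, w ∈ V. Let p and q be G-invariant subspaces of V, each nonzero and irreducible (having no G-invariant subspaces other than 0 and itself), such that there is no G-equivariant ℂ-linear isomorphism from p onto q. Then p and q are orthogonal: ⟪v, w⟫ = 0 for all v ∈ p and w ∈ q. -/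
/-!
Since the inner product is `G`-invariant, the orthogonal complement of the invariant subspace
`q` is again invariant, so the orthogonal projection onto `q` commutes with every `ρ g`.
Restricted to `p`, it is therefore an equivariant map `p → q` between irreducible
representations, and by Schur's lemma it is either zero or an isomorphism. The second case is
excluded, and the first says that `p ⊆ qᗮ`.
-/

namespace Representation

section Schur

variable {k G V : Type*} [CommRing k] [Monoid G] [AddCommGroup V] [Module k V]
  {ρ : Representation k G V}

lemma mem_invtSubmodule_iff_forall_mem {p : Submodule k V} :
    p ∈ ρ.invtSubmodule ↔ ∀ g, ∀ v ∈ p, ρ g v ∈ p := by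
  simp only [mem_invtSubmodule, Module.End.mem_invtSubmodule_iff_forall_mem_of_mem]

variable {f : V →ₗ[k] V}

lemma ker_mem_invtSubmodule (hf : ∀ g v, f (ρ g v) = ρ g (f v)) :
    LinearMap.ker f ∈ ρ.invtSubmodule :=
  mem_invtSubmodule_iff_forall_mem.mpr fun g v hv => by
    rw [LinearMap.mem_ker] at hv ⊢
    rw [hf, hv, map_zero]

lemma map_mem_invtSubmodule (hf : ∀ g v, f (ρ g v) = ρ g (f v)) {p : Submodule k V}
    (hp : p ∈ ρ.invtSubmodule) : p.map f ∈ ρ.invtSubmodule :=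
  mem_invtSubmodule_iff_forall_mem.mpr fun g _ ⟨v, hv, hfv⟩ =>
    ⟨ρ g v, mem_invtSubmodule_iff_forall_mem.mp hp g v hv, hfv ▸ hf g v⟩

/-- Schur's lemma for invariant submodules. -/
theorem le_ker_or_bijective_restrict (hf : ∀ g v, f (ρ g v) = ρ g (f v))
    {p q : Submodule k V} (hp : p ∈ ρ.invtSubmodule)
    (hpirr : ∀ r ∈ ρ.invtSubmodule, r ≤ p → r = ⊥ ∨ r = p)
    (hqirr : ∀ r ∈ ρ.invtSubmodule, r ≤ q → r = ⊥ ∨ r = q) (hfpq : ∀ v ∈ p, f v ∈ q) :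
    p ≤ LinearMap.ker f ∨ Function.Bijective (f.restrict hfpq) := by
  rcases hpirr _ ((ρ.invtSubmodule).inf_mem hp (ker_mem_invtSubmodule hf)) inf_le_left with
    hdisj | hker
  · rcases hqirr _ (map_mem_invtSubmodule hf hp) (Submodule.map_le_iff_le_comap.mpr hfpq) with
      himage | himage
    · exact .inl (LinearMap.le_ker_iff_map.mpr himage)
    · refine .inr ⟨(LinearMap.injective_restrict_iff hfpq).mpr (disjoint_iff.mpr hdisj), ?_⟩
      rw [← LinearMap.range_eq_top, LinearMap.range_restrict, himage, Submodule.comap_subtype_self]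
  · exact .inl (inf_eq_left.mp hker)

end Schur

section Unitary

variable {𝕜 G E : Type*} [RCLike 𝕜] [Group G] [NormedAddCommGroup E] [InnerProductSpace 𝕜 E]
  {ρ : Representation 𝕜 G E}

lemma orthogonal_mem_invtSubmodule (hinv : ∀ g v w, inner 𝕜 (ρ g v) (ρ g w) = inner 𝕜 v w)
    {K : Submodule 𝕜 E} (hK : K ∈ ρ.invtSubmodule) : Kᗮ ∈ ρ.invtSubmodule := by
  refine mem_invtSubmodule_iff_forall_mem.mpr fun g v hv => (K.mem_orthogonal _).mpr fun w hw => ?_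
  rw [← ρ.self_inv_apply g w, hinv]
  exact (K.mem_orthogonal v).mp hv _ (mem_invtSubmodule_iff_forall_mem.mp hK g⁻¹ w hw)

lemma starProjection_apply_rho (hinv : ∀ g v w, inner 𝕜 (ρ g v) (ρ g w) = inner 𝕜 v w)
    {K : Submodule 𝕜 E} [K.HasOrthogonalProjection] (hK : K ∈ ρ.invtSubmodule) (g : G) (v : E) :
    K.starProjection (ρ g v) = ρ g (K.starProjection v) := by
  refine K.eq_starProjection_of_mem_orthogonal
    (mem_invtSubmodule_iff_forall_mem.mp hK g _ (K.starProjection_apply_mem v)) ?_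
  rw [← map_sub]
  exact mem_invtSubmodule_iff_forall_mem.mp (orthogonal_mem_invtSubmodule hinv hK) g _
    (K.sub_starProjection_mem_orthogonal v)

end Unitary

end Representation

open Representation in
theorem orthogonal_of_not_iso_general {G : Type*} [Group G] {V : Type*} [NormedAddCommGroup V]
    [InnerProductSpace ℂ V] [FiniteDimensional ℂ V]
    (ρ : Representation ℂ G V)
    (hinv : ∀ (g : G) (v w : V), (inner ℂ (ρ g v) (ρ g w) : ℂ) = inner ℂ v w)
    (p q : Submodule ℂ V)
    (hp : ∀ (g : G), ∀ v ∈ p, ρ g v ∈ p)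
    (hq : ∀ (g : G), ∀ w ∈ q, ρ g w ∈ q)
    (hpirr : ∀ r : Submodule ℂ V, r ≤ p → (∀ (g : G), ∀ v ∈ r, ρ g v ∈ r) → r = ⊥ ∨ r = p)
    (hqirr : ∀ r : Submodule ℂ V, r ≤ q → (∀ (g : G), ∀ v ∈ r, ρ g v ∈ r) → r = ⊥ ∨ r = q)
    (hniso : ¬ ∃ e : p ≃ₗ[ℂ] q, ∀ (g : G) (v : V) (hv : v ∈ p),
      ((e ⟨ρ g v, hp g v hv⟩ : q) : V) = ρ g ((e ⟨v, hv⟩ : q) : V)) :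
    ∀ v ∈ p, ∀ w ∈ q, (inner ℂ v w : ℂ) = 0 := by
  have hcomm := starProjection_apply_rho hinv (mem_invtSubmodule_iff_forall_mem.mpr hq)
  rcases le_ker_or_bijective_restrict (f := (q.starProjection : V →ₗ[ℂ] V)) hcomm
      (mem_invtSubmodule_iff_forall_mem.mpr hp)
      (fun r hr hle => hpirr r hle (mem_invtSubmodule_iff_forall_mem.mp hr))
      (fun r hr hle => hqirr r hle (mem_invtSubmodule_iff_forall_mem.mp hr))
      (fun v _ => q.starProjection_apply_mem v) with hker | hbij
  · intro v hv w hw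
    have hvq : v ∈ qᗮ := q.starProjection_apply_eq_zero_iff.mp (hker hv)
    exact Submodule.inner_left_of_mem_orthogonal hw hvq
  · exact (hniso ⟨LinearEquiv.ofBijective _ hbij, fun g v _ => hcomm g v⟩).elim

/-- Let `ρ` be a representation of a group `G` on a finite-dimensional complex inner
product space `V` whose inner product is `G`-invariant.  If `p` and `q` are nonzero
irreducible `G`-invariant subspaces of `V` which are not `G`-equivariantly isomorphic,
then `p` and `q` are orthogonal. -/
theorem orthogonal_of_not_iso {G : Type*} [Group G] {V : Type*} [NormedAddCommGroup V]
    [InnerProductSpace ℂ V] [FiniteDimensional ℂ V]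
    (ρ : Representation ℂ G V)
    (hinv : ∀ (g : G) (v w : V), (inner ℂ (ρ g v) (ρ g w) : ℂ) = inner ℂ v w)
    (p q : Submodule ℂ V)
    (hp : ∀ (g : G), ∀ v ∈ p, ρ g v ∈ p)
    (hq : ∀ (g : G), ∀ w ∈ q, ρ g w ∈ q)
    (hpne : p ≠ ⊥) (hqne : q ≠ ⊥)
    (hpirr : ∀ r : Submodule ℂ V, r ≤ p → (∀ (g : G), ∀ v ∈ r, ρ g v ∈ r) → r = ⊥ ∨ r = p)
    (hqirr : ∀ r : Submodule ℂ V, r ≤ q → (∀ (g : G), ∀ v ∈ r, ρ g v ∈ r) → r = ⊥ ∨ r = q)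
    (hniso : ¬ ∃ e : p ≃ₗ[ℂ] q, ∀ (g : G) (v : V) (hv : v ∈ p),
      ((e ⟨ρ g v, hp g v hv⟩ : q) : V) = ρ g ((e ⟨v, hv⟩ : q) : V)) :
    ∀ v ∈ p, ∀ w ∈ q, (inner ℂ v w : ℂ) = 0 :=
  orthogonal_of_not_iso_general ρ hinv p q hp hq hpirr hqirr hniso
end

section
/- (Weyl's eigenvalue inequalities and their duals.) Let d ≥ 1 and let A and B be d×d complex Hermitian matrices, with C = A + B. Let α, β, γ : {1,…,d} → ℝ be weakly decreasing enumerations of the eigenvalues, with multiplicity, of A, B, and C respectively (i.e., there exist unitary matrices U, V, W with U A U* = diag(α₁,…,α_d), V B V* = diag(β₁,…,β_d), W C W* = diag(γ₁,…,γ_d)). Then for all 1 ≤ i, j, k ≤ d: if i + j = k + 1 then γ_k ≤ α_i + β_j, and if i + j = k + d then α_i + β_j ≤ γ_k. -/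
/-!
If `U A Uᴴ = diag α` with `α` antitone (indices from `0`), then `x* A x ≤ α i ‖x‖²` whenever
`(U x)_l = 0` for all `l < i`, and `α k ‖x‖² ≤ x* A x` whenever `(U x)_l = 0` for all `l > k`.
Asking this for `A`, `B` and `C = A + B` at once imposes `i + j + (d - 1 - k)` linear
conditions on `x`; when `i + j ≤ k` these are fewer than `d`, so some `x ≠ 0` meets all of them
and `γ k ‖x‖² ≤ x* C x = x* A x + x* B x ≤ (α i + β j) ‖x‖²`. The dual inequalities are the
same statement for `-A`, `-B`, `-C` with the order on the indices reversed.
-/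

open scoped Matrix
open Matrix Finset OrderDual

theorem Matrix.exists_mulVec_eq_zero_of_card_lt {m n K : Type*} [Fintype m] [Fintype n]
    [Field K] (M : Matrix m n K) (h : Fintype.card m < Fintype.card n) :
    ∃ x ≠ 0, M *ᵥ x = 0 := by
  have hker : LinearMap.ker M.mulVecLin ≠ ⊥ :=
    LinearMap.ker_ne_bot_of_finrank_lt (by simpa only [Module.finrank_fintype_fun_eq_card])
  simpa [ker_mulVecLin_eq_bot_iff, and_comm] using hker

section Antitone

variable {ι : Type*} [Fintype ι] [LinearOrder ι] {α w : ι → ℝ}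

theorem sum_mul_le_mul_sum_of_antitone (hα : Antitone α) (hw : 0 ≤ w) {i : ι}
    (hi : ∀ l < i, w l = 0) : ∑ l, α l * w l ≤ α i * ∑ l, w l := by
  rw [mul_sum]
  refine sum_le_sum fun l _ => ?_
  rcases lt_or_ge l i with hl | hl
  · simp [hi l hl]
  · exact mul_le_mul_of_nonneg_right (hα hl) (hw l)

theorem mul_sum_le_sum_mul_of_antitone (hα : Antitone α) (hw : 0 ≤ w) {k : ι}
    (hk : ∀ l, k < l → w l = 0) : α k * ∑ l, w l ≤ ∑ l, α l * w l := by
  rw [mul_sum]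
  refine sum_le_sum fun l _ => ?_
  rcases lt_or_ge k l with hl | hl
  · simp [hk l hl]
  · exact mul_le_mul_of_nonneg_right (hα hl) (hw l)

end Antitone

section QuadraticForm

variable {ι : Type*} [Fintype ι]

theorem star_dotProduct_conjTranspose_mul_mul_mulVec (U M : Matrix ι ι ℂ) (x : ι → ℂ) :
    star x ⬝ᵥ (Uᴴ * M * U) *ᵥ x = star (U *ᵥ x) ⬝ᵥ M *ᵥ (U *ᵥ x) := by
  rw [star_mulVec, ← mulVec_mulVec, ← mulVec_mulVec, dotProduct_mulVec, dotProduct_mulVec,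
    dotProduct_mulVec, vecMul_vecMul]

variable [DecidableEq ι]

theorem star_dotProduct_diagonal_mulVec (α : ι → ℝ) (y : ι → ℂ) :
    star y ⬝ᵥ diagonal (fun l => (α l : ℂ)) *ᵥ y = ((∑ l, α l * ‖y l‖ ^ 2 : ℝ) : ℂ) := by
  simp only [dotProduct, mulVec_diagonal, Pi.star_apply, Complex.star_def]
  push_cast
  refine sum_congr rfl fun l _ => ?_
  rw [← Complex.conj_mul']
  ring

variable {U A : Matrix ι ι ℂ} {α : ι → ℝ}

theorem eq_conjTranspose_mul_mul_of_mem_unitaryGroup (hU : U ∈ unitaryGroup ι ℂ)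
    {D : Matrix ι ι ℂ} (hA : U * A * Uᴴ = D) : A = Uᴴ * D * U := by
  have hUU : Uᴴ * U = 1 := mem_unitaryGroup_iff'.mp hU
  rw [← hA, Matrix.mul_assoc, Matrix.mul_assoc, hUU, ← Matrix.mul_assoc, ← Matrix.mul_assoc,
    hUU, Matrix.one_mul, Matrix.mul_one]

theorem star_dotProduct_mulVec_eq_sum (hU : U ∈ unitaryGroup ι ℂ)
    (hA : U * A * Uᴴ = diagonal fun l => (α l : ℂ)) (x : ι → ℂ) :
    star x ⬝ᵥ A *ᵥ x = ((∑ l, α l * ‖(U *ᵥ x) l‖ ^ 2 : ℝ) : ℂ) := by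
  rw [eq_conjTranspose_mul_mul_of_mem_unitaryGroup hU hA,
    star_dotProduct_conjTranspose_mul_mul_mulVec, star_dotProduct_diagonal_mulVec]

theorem sum_norm_sq_mulVec_of_mem_unitaryGroup (hU : U ∈ unitaryGroup ι ℂ) (x : ι → ℂ) :
    ∑ l, ‖(U *ᵥ x) l‖ ^ 2 = ∑ l, ‖x l‖ ^ 2 := by
  have hU1 : U * 1 * Uᴴ = diagonal fun _ => ((1 : ℝ) : ℂ) := by
    simpa [← star_eq_conjTranspose] using mem_unitaryGroup_iff.mp hU
  have h := star_dotProduct_mulVec_eq_sum hU hU1 x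
  rw [star_dotProduct_mulVec_eq_sum (U := 1) (α := fun _ => 1) (one_mem _) (by simp) x] at h
  simp only [one_mul, one_mulVec] at h
  exact_mod_cast h.symm

end QuadraticForm

def Matrix.IsUnitarilySimilarToDiagonal {ι : Type*} [Fintype ι] [DecidableEq ι]
    (A : Matrix ι ι ℂ) (α : ι → ℝ) : Prop :=
  ∃ U ∈ unitaryGroup ι ℂ, U * A * Uᴴ = diagonal fun l => (α l : ℂ)

theorem Matrix.IsUnitarilySimilarToDiagonal.neg_submatrix_ofDual {ι : Type*} [Fintype ι]
    [DecidableEq ι] {A : Matrix ι ι ℂ} {α : ι → ℝ} (h : A.IsUnitarilySimilarToDiagonal α) :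
    (-A.submatrix ofDual ofDual).IsUnitarilySimilarToDiagonal fun l => -α (ofDual l) := by
  obtain ⟨U, hU, hA⟩ := h
  refine ⟨U.submatrix ofDual ofDual, hU, ?_⟩
  have hneg : U * -A * Uᴴ = diagonal fun l => ((-α l : ℝ) : ℂ) := by simp [hA]
  exact hneg

section Weyl

variable {ι : Type*} [Fintype ι] [DecidableEq ι] [LinearOrder ι]
  {U A B : Matrix ι ι ℂ} {α β γ : ι → ℝ} {x : ι → ℂ}

theorem re_star_dotProduct_mulVec_le (hα : Antitone α) (hU : U ∈ unitaryGroup ι ℂ)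
    (hA : U * A * Uᴴ = diagonal fun l => (α l : ℂ)) {i : ι} (hx : ∀ l < i, (U *ᵥ x) l = 0) :
    (star x ⬝ᵥ A *ᵥ x).re ≤ α i * ∑ l, ‖x l‖ ^ 2 := by
  rw [star_dotProduct_mulVec_eq_sum hU hA, Complex.ofReal_re,
    ← sum_norm_sq_mulVec_of_mem_unitaryGroup hU]
  exact sum_mul_le_mul_sum_of_antitone hα (fun l => by positivity) fun l hl => by simp [hx l hl]

theorem le_re_star_dotProduct_mulVec (hα : Antitone α) (hU : U ∈ unitaryGroup ι ℂ)
    (hA : U * A * Uᴴ = diagonal fun l => (α l : ℂ)) {k : ι}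
    (hx : ∀ l, k < l → (U *ᵥ x) l = 0) :
    α k * ∑ l, ‖x l‖ ^ 2 ≤ (star x ⬝ᵥ A *ᵥ x).re := by
  rw [star_dotProduct_mulVec_eq_sum hU hA, Complex.ofReal_re,
    ← sum_norm_sq_mulVec_of_mem_unitaryGroup hU]
  exact mul_sum_le_sum_mul_of_antitone hα (fun l => by positivity) fun l hl => by simp [hx l hl]

variable [LocallyFiniteOrderBot ι] [LocallyFiniteOrderTop ι]

theorem weyl_le_add (hα : Antitone α) (hβ : Antitone β) (hγ : Antitone γ)
    (hA : A.IsUnitarilySimilarToDiagonal α) (hB : B.IsUnitarilySimilarToDiagonal β)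
    (hC : (A + B).IsUnitarilySimilarToDiagonal γ) {i j k : ι}
    (hijk : #(Iio i) + #(Iio j) + #(Ioi k) < Fintype.card ι) : γ k ≤ α i + β j := by
  obtain ⟨U, hU, hUA⟩ := hA
  obtain ⟨V, hV, hVB⟩ := hB
  obtain ⟨W, hW, hWC⟩ := hC
  let M : Matrix (Iio i ⊕ Iio j ⊕ Ioi k) ι ℂ :=
    of (Sum.elim (fun l => U l) (Sum.elim (fun l => V l) (fun l => W l)))
  obtain ⟨x, hx0, hMx⟩ := M.exists_mulVec_eq_zero_of_card_lt
    (by simpa only [Fintype.card_sum, Fintype.card_coe, add_assoc] using hijk)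
  have hUx : ∀ l < i, (U *ᵥ x) l = 0 := fun l hl => congrFun hMx (.inl ⟨l, mem_Iio.2 hl⟩)
  have hVx : ∀ l < j, (V *ᵥ x) l = 0 := fun l hl =>
    congrFun hMx (.inr (.inl ⟨l, mem_Iio.2 hl⟩))
  have hWx : ∀ l, k < l → (W *ᵥ x) l = 0 := fun l hl =>
    congrFun hMx (.inr (.inr ⟨l, mem_Ioi.2 hl⟩))
  have hx : 0 < ∑ l, ‖x l‖ ^ 2 := by
    obtain ⟨l, hl⟩ := Function.ne_iff.mp hx0
    exact sum_pos' (fun _ _ => by positivity) ⟨l, mem_univ _, pow_pos (norm_pos_iff.2 hl) 2⟩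
  refine le_of_mul_le_mul_right ?_ hx
  calc γ k * ∑ l, ‖x l‖ ^ 2 ≤ (star x ⬝ᵥ (A + B) *ᵥ x).re :=
        le_re_star_dotProduct_mulVec hγ hW hWC hWx
    _ = (star x ⬝ᵥ A *ᵥ x).re + (star x ⬝ᵥ B *ᵥ x).re := by
      rw [add_mulVec, dotProduct_add, Complex.add_re]
    _ ≤ α i * ∑ l, ‖x l‖ ^ 2 + β j * ∑ l, ‖x l‖ ^ 2 :=
      add_le_add (re_star_dotProduct_mulVec_le hα hU hUA hUx)
        (re_star_dotProduct_mulVec_le hβ hV hVB hVx)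
    _ = (α i + β j) * ∑ l, ‖x l‖ ^ 2 := (add_mul _ _ _).symm

theorem weyl_add_le (hα : Antitone α) (hβ : Antitone β) (hγ : Antitone γ)
    (hA : A.IsUnitarilySimilarToDiagonal α) (hB : B.IsUnitarilySimilarToDiagonal β)
    (hC : (A + B).IsUnitarilySimilarToDiagonal γ) {i j k : ι}
    (hijk : #(Ioi i) + #(Ioi j) + #(Iio k) < Fintype.card ι) : α i + β j ≤ γ k := by
  have hsum : -(A + B).submatrix ofDual ofDual =
      -A.submatrix ofDual ofDual + -B.submatrix ofDual ofDual := by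
    rw [← neg_add]
    rfl
  have hC' := hC.neg_submatrix_ofDual
  rw [hsum] at hC'
  have h := weyl_le_add hα.dual_left.neg hβ.dual_left.neg hγ.dual_left.neg
    hA.neg_submatrix_ofDual hB.neg_submatrix_ofDual hC' (i := toDual i) (j := toDual j)
    (k := toDual k) (by simpa [Iio_toDual, Ioi_toDual] using hijk)
  simp only [Function.comp_apply, ofDual_toDual] at h
  linarith

end Weyl

theorem weyl_inequalities_general (d : ℕ)
    (A B : Matrix (Fin d) (Fin d) ℂ)
    (α β γ : Fin d → ℝ) (hα : Antitone α) (hβ : Antitone β) (hγ : Antitone γ)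
    (hUA : ∃ U ∈ Matrix.unitaryGroup (Fin d) ℂ,
      U * A * Uᴴ = Matrix.diagonal fun i => (α i : ℂ))
    (hUB : ∃ U ∈ Matrix.unitaryGroup (Fin d) ℂ,
      U * B * Uᴴ = Matrix.diagonal fun i => (β i : ℂ))
    (hUC : ∃ U ∈ Matrix.unitaryGroup (Fin d) ℂ,
      U * (A + B) * Uᴴ = Matrix.diagonal fun i => (γ i : ℂ)) :
    ∀ i j k : Fin d,
      ((((i : ℕ) + 1) + ((j : ℕ) + 1) = ((k : ℕ) + 1) + 1 → γ k ≤ α i + β j) ∧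
       (((i : ℕ) + 1) + ((j : ℕ) + 1) = ((k : ℕ) + 1) + d → α i + β j ≤ γ k)) := by
  intro i j k
  constructor
  · intro h
    refine weyl_le_add hα hβ hγ hUA hUB hUC ?_
    simp only [Fin.card_Iio, Fin.card_Ioi, Fintype.card_fin]
    omega
  · intro h
    refine weyl_add_le hα hβ hγ hUA hUB hUC ?_
    simp only [Fin.card_Iio, Fin.card_Ioi, Fintype.card_fin]
    omega

/-- Weyl's eigenvalue inequalities and their duals.  Let `A`, `B` be `d × d`
complex Hermitian matrices and `C = A + B`, and let `α`, `β`, `γ` be weakly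
decreasing enumerations of the eigenvalues (with multiplicity) of `A`, `B`, `C`
respectively.  Then (indices written 1-based via `i ↦ (i : ℕ) + 1`):
if `i + j = k + 1` then `γ_k ≤ α_i + β_j`, and if `i + j = k + d`
then `α_i + β_j ≤ γ_k`. -/
theorem weyl_inequalities (d : ℕ) (hd : 1 ≤ d)
    (A B : Matrix (Fin d) (Fin d) ℂ) (hA : A.IsHermitian) (hB : B.IsHermitian)
    (α β γ : Fin d → ℝ) (hα : Antitone α) (hβ : Antitone β) (hγ : Antitone γ)
    (hUA : ∃ U ∈ Matrix.unitaryGroup (Fin d) ℂ,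
      U * A * Uᴴ = Matrix.diagonal fun i => (α i : ℂ))
    (hUB : ∃ U ∈ Matrix.unitaryGroup (Fin d) ℂ,
      U * B * Uᴴ = Matrix.diagonal fun i => (β i : ℂ))
    (hUC : ∃ U ∈ Matrix.unitaryGroup (Fin d) ℂ,
      U * (A + B) * Uᴴ = Matrix.diagonal fun i => (γ i : ℂ)) :
    ∀ i j k : Fin d,
      ((((i : ℕ) + 1) + ((j : ℕ) + 1) = ((k : ℕ) + 1) + 1 → γ k ≤ α i + β j) ∧
       (((i : ℕ) + 1) + ((j : ℕ) + 1) = ((k : ℕ) + 1) + d → α i + β j ≤ γ k)) :=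
  weyl_inequalities_general d A B α β γ hα hβ hγ hUA hUB hUC
end
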